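/- SSP decomposition stability for RK3: if A ∈ M_N(ℂ) satisfies r(I + A) ≤ 1, then P₃(A) := I + A + A²/2 + A³/6 satisfies r(P₃(A)) ≤ 1, using the identity P₃(A) = (1/3)I + (1/2)(I + A) + (1/6)(I + A)³. -/

import Mathlib

noncomputable def opNorm {N : ℕ} (A : Matrix (Fin N) (Fin N) ℂ) : ℝ :=
  ‖Matrix.toEuclideanCLM (𝕜 := ℂ) A‖

noncomputable def numRad {N : ℕ} (A : Matrix (Fin N) (Fin N) ℂ) : ℝ :=
  sSup {r : ℝ | ∃ x : EuclideanSpace ℂ (Fin N), ‖x‖ = 1 ∧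
    r = ‖(inner (𝕜 := ℂ) x (Matrix.toEuclideanCLM (𝕜 := ℂ) A x))‖}

noncomputable def numRange {N : ℕ} (A : Matrix (Fin N) (Fin N) ℂ) : Set ℂ :=
  {z : ℂ | ∃ x : EuclideanSpace ℂ (Fin N), ‖x‖ = 1 ∧
    z = inner (𝕜 := ℂ) x (Matrix.toEuclideanCLM (𝕜 := ℂ) A x)}

/-!
Write `w` for the numerical radius and suppose `w(T) ≤ 1`. For `‖z‖ < 1` and `ω` a primitive
cube root of unity, each `1 - ωᵏ z T` has real part at least `1 - ‖z‖ > 0`, so it is invertible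
with an accretive inverse. Since `1 - z³T³ = ∏ₖ (1 - ωᵏ z T)` and the pairwise products of the
factors sum to `3`, the operator `1 - z³T³` is the inverse of the average of those inverses, hence
accretive. As `z` ranges over the unit disc this gives `Re (z³ ⟪x, T³ x⟫) ≤ ‖x‖²`, i.e.
`w(T³) ≤ 1` (Pearcy's proof of the power inequality). With `T = 1 + A`,
`P₃(A) = 1/3 + T/2 + T³/6`, so `w(P₃(A)) ≤ 1/3 + 1/2 + 1/6 = 1`.
-/

open scoped InnerProductSpace

theorem Complex.norm_le_of_forall_re_pow_mul_le {n : ℕ} (hn : n ≠ 0) {c : ℂ} {b : ℝ}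
    (h : ∀ z : ℂ, ‖z‖ < 1 → (z ^ n * c).re ≤ b) : ‖c‖ ≤ b := by
  have hb : 0 ≤ b := by simpa [hn] using h 0 (by simp)
  refine le_of_forall_lt_imp_le_of_dense fun t ht => ?_
  rcases le_or_gt t 0 with ht0 | ht0
  · exact ht0.trans hb
  have hc : c ≠ 0 := norm_pos_iff.mp (ht0.trans ht)
  obtain ⟨z, hz⟩ := IsAlgClosed.exists_pow_nat_eq ((t : ℂ) / c) (Nat.pos_of_ne_zero hn)
  have hz1 : ‖z‖ < 1 := by
    rw [← pow_lt_one_iff_of_nonneg (norm_nonneg z) hn, ← norm_pow, hz, norm_div,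
      Complex.norm_real, Real.norm_of_nonneg ht0.le, div_lt_one (norm_pos_iff.mpr hc)]
    exact ht
  simpa [hz, div_mul_cancel₀ _ hc] using h z hz1

theorem Commute.add_add_mul_mul_mul_of_mul_eq_one {R : Type*} [Ring R] {a b c a' b' c' : R}
    (ha : a' * a = 1) (hb : b' * b = 1) (hc : c' * c = 1)
    (hab : Commute a b) (hac : Commute a c) (hbc : Commute b c) :
    (a' + b' + c') * (a * b * c) = b * c + a * c + a * b := by
  have h₁ : a' * (a * b * c) = b * c := by rw [mul_assoc, ← mul_assoc, ha, one_mul]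
  have h₂ : b' * (a * b * c) = a * c := by
    rw [mul_assoc, hab.left_comm, ← mul_assoc, hb, one_mul]
  have h₃ : c' * (a * b * c) = a * b := by
    rw [(hac.mul_left hbc).eq, ← mul_assoc, hc, one_mul]
  rw [add_mul, add_mul, h₁, h₂, h₃]

section CubeRoots

variable {R : Type*} [Ring R] [Algebra ℂ R] (t : R) {ω : ℂ} (z : ℂ)

theorem commute_one_sub_smul (a b : ℂ) : Commute (1 - a • t) (1 - b • t) :=
  (Commute.one_left _).sub_left <|
    ((Commute.one_right _).sub_right ((Commute.refl t).smul_right b)).smul_left a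

theorem one_sub_smul_mul_cube_roots (hω : 1 + ω + ω ^ 2 = 0) :
    (1 - z • t) * (1 - (ω * z) • t) * (1 - (ω ^ 2 * z) • t) = 1 - z ^ 3 • t ^ 3 := by
  simp only [sub_mul, mul_sub, one_mul, mul_one, smul_mul_assoc, mul_smul_comm, pow_succ,
    pow_zero, mul_assoc]
  match_scalars
  · ring
  · linear_combination (-z) * hω
  · linear_combination z ^ 2 * ω * hω
  · linear_combination z ^ 3 * (1 - ω) * hω

theorem sum_pairwise_mul_one_sub_smul_cube_roots (hω : 1 + ω + ω ^ 2 = 0) :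
    (1 - (ω * z) • t) * (1 - (ω ^ 2 * z) • t) + (1 - z • t) * (1 - (ω ^ 2 * z) • t) +
      (1 - z • t) * (1 - (ω * z) • t) = (3 : ℂ) • 1 := by
  simp only [sub_mul, mul_sub, one_mul, mul_one, smul_mul_assoc, mul_smul_comm]
  match_scalars
  · ring
  · linear_combination (-2 * z) * hω
  · linear_combination z ^ 2 * ω * hω

theorem ssp_decomposition_rk3 (a : R) :
    1 + a + (1 / 2 : ℂ) • a ^ 2 + (1 / 6 : ℂ) • a ^ 3 =
      (3 : ℂ)⁻¹ • 1 + (2 : ℂ)⁻¹ • (1 + a) + (6 : ℂ)⁻¹ • (1 + a) ^ 3 := by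
  simp only [pow_succ, pow_zero, one_mul, mul_one, add_mul, mul_add]
  module

end CubeRoots

section Accretive

variable {E : Type*} [NormedAddCommGroup E] [InnerProductSpace ℂ E]

def IsAccretive (S : E →L[ℂ] E) : Prop :=
  ∀ x, 0 ≤ (⟪x, S x⟫_ℂ).re

namespace IsAccretive

variable {S S' : E →L[ℂ] E}

theorem add (hS : IsAccretive S) (hS' : IsAccretive S') : IsAccretive (S + S') := fun x => by
  simpa only [add_apply, inner_add_right, Complex.add_re] using add_nonneg (hS x) (hS' x)

theorem real_smul (hS : IsAccretive S) {a : ℝ} (ha : 0 ≤ a) : IsAccretive ((a : ℂ) • S) :=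
  fun x => by
    simpa only [smul_apply, inner_smul_right, Complex.re_ofReal_mul] using mul_nonneg ha (hS x)

theorem of_mul_eq_one (hS : IsAccretive S) (h : S * S' = 1) : IsAccretive S' := fun y => by
  have hy : S (S' y) = y := by rw [← mul_apply_eq_comp, h, one_apply_eq_self]
  simpa only [hy, ← inner_conj_symm y, Complex.conj_re] using hS (S' y)

end IsAccretive

variable {T : E →L[ℂ] E}

theorem re_inner_one_sub_smul_ge (hT : ∀ x, ‖⟪x, T x⟫_ℂ‖ ≤ ‖x‖ ^ 2) (w : ℂ) (x : E) :
    (1 - ‖w‖) * ‖x‖ ^ 2 ≤ (⟪x, (1 - w • T) x⟫_ℂ).re := by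
  have hwT : (w * ⟪x, T x⟫_ℂ).re ≤ ‖w‖ * ‖x‖ ^ 2 :=
    calc (w * ⟪x, T x⟫_ℂ).re ≤ ‖w‖ * ‖⟪x, T x⟫_ℂ‖ :=
          (Complex.re_le_norm _).trans (norm_mul _ _).le
      _ ≤ ‖w‖ * ‖x‖ ^ 2 := mul_le_mul_of_nonneg_left (hT x) (norm_nonneg w)
  have hxx : (⟪x, x⟫_ℂ).re = ‖x‖ ^ 2 := inner_self_eq_norm_sq (𝕜 := ℂ) x
  simp only [sub_apply, one_apply_eq_self, smul_apply, inner_sub_right, inner_smul_right,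
    Complex.sub_re, hxx]
  linarith

theorem isAccretive_one_sub_smul (hT : ∀ x, ‖⟪x, T x⟫_ℂ‖ ≤ ‖x‖ ^ 2) {w : ℂ} (hw : ‖w‖ ≤ 1) :
    IsAccretive (1 - w • T) := fun x =>
  (mul_nonneg (sub_nonneg.mpr hw) (sq_nonneg _)).trans (re_inner_one_sub_smul_ge hT w x)

theorem isUnit_one_sub_smul [FiniteDimensional ℂ E] (hT : ∀ x, ‖⟪x, T x⟫_ℂ‖ ≤ ‖x‖ ^ 2)
    {w : ℂ} (hw : ‖w‖ < 1) : IsUnit (1 - w • T) := by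
  have hinj : Function.Injective ⇑(1 - w • T) := by
    refine (injective_iff_map_eq_zero _).mpr fun x hx => ?_
    have hx2 := re_inner_one_sub_smul_ge hT w x
    rw [hx, inner_zero_right, Complex.zero_re] at hx2
    have : ‖x‖ ^ 2 ≤ 0 := nonpos_of_mul_nonpos_right hx2 (sub_pos.mpr hw)
    exact norm_eq_zero.mp (pow_eq_zero_iff two_ne_zero |>.mp (le_antisymm this (sq_nonneg _)))
  exact ContinuousLinearMap.isUnit_iff_bijective.mpr
    ⟨hinj, LinearMap.injective_iff_surjective.mp hinj⟩

theorem exists_isAccretive_mul_one_sub_smul_eq_one [FiniteDimensional ℂ E]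
    (hT : ∀ x, ‖⟪x, T x⟫_ℂ‖ ≤ ‖x‖ ^ 2) {w : ℂ} (hw : ‖w‖ < 1) :
    ∃ S, IsAccretive S ∧ S * (1 - w • T) = 1 := by
  obtain ⟨u, hu⟩ := isUnit_one_sub_smul hT hw
  refine ⟨↑u⁻¹, (isAccretive_one_sub_smul hT hw.le).of_mul_eq_one ?_, ?_⟩ <;> simp [← hu]

theorem isAccretive_one_sub_pow_three_smul_pow_three [FiniteDimensional ℂ E]
    (hT : ∀ x, ‖⟪x, T x⟫_ℂ‖ ≤ ‖x‖ ^ 2) {z : ℂ} (hz : ‖z‖ < 1) :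
    IsAccretive (1 - z ^ 3 • T ^ 3) := by
  obtain ⟨ω, hω⟩ : ∃ ω : ℂ, IsPrimitiveRoot ω 3 :=
    ⟨_, Complex.isPrimitiveRoot_exp 3 three_ne_zero⟩
  have hω_sum : 1 + ω + ω ^ 2 = 0 := by
    simpa [Finset.sum_range_succ] using hω.geom_sum_eq_zero (by norm_num)
  have hω_norm : ∀ k : ℕ, ‖ω ^ k * z‖ < 1 := fun k => by
    rwa [norm_mul, norm_pow, hω.norm'_eq_one three_ne_zero, one_pow, one_mul]
  obtain ⟨S₀, hS₀, h₀⟩ := exists_isAccretive_mul_one_sub_smul_eq_one hT hz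
  obtain ⟨S₁, hS₁, h₁⟩ :=
    exists_isAccretive_mul_one_sub_smul_eq_one hT (by simpa only [pow_one] using hω_norm 1)
  obtain ⟨S₂, hS₂, h₂⟩ := exists_isAccretive_mul_one_sub_smul_eq_one hT (hω_norm 2)
  refine (((hS₀.add hS₁).add hS₂).real_smul (a := 3⁻¹) (by norm_num)).of_mul_eq_one ?_
  rw [← one_sub_smul_mul_cube_roots T z hω_sum, smul_mul_assoc,
    Commute.add_add_mul_mul_mul_of_mul_eq_one h₀ h₁ h₂ (commute_one_sub_smul T _ _)
      (commute_one_sub_smul T _ _) (commute_one_sub_smul T _ _),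
    sum_pairwise_mul_one_sub_smul_cube_roots T z hω_sum, smul_smul]
  norm_num

theorem norm_inner_pow_three_le [FiniteDimensional ℂ E] (hT : ∀ x, ‖⟪x, T x⟫_ℂ‖ ≤ ‖x‖ ^ 2)
    (x : E) : ‖⟪x, (T ^ 3) x⟫_ℂ‖ ≤ ‖x‖ ^ 2 := by
  refine Complex.norm_le_of_forall_re_pow_mul_le three_ne_zero fun z hz => ?_
  have hxx : (⟪x, x⟫_ℂ).re = ‖x‖ ^ 2 := inner_self_eq_norm_sq (𝕜 := ℂ) x
  have := isAccretive_one_sub_pow_three_smul_pow_three hT hz x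
  simp only [sub_apply, one_apply_eq_self, smul_apply, inner_sub_right, inner_smul_right,
    Complex.sub_re, hxx] at this
  linarith

theorem norm_inner_ssp_rk3_le [FiniteDimensional ℂ E] (hT : ∀ x, ‖⟪x, T x⟫_ℂ‖ ≤ ‖x‖ ^ 2)
    (x : E) :
    ‖⟪x, ((3 : ℂ)⁻¹ • 1 + (2 : ℂ)⁻¹ • T + (6 : ℂ)⁻¹ • T ^ 3 : E →L[ℂ] E) x⟫_ℂ‖ ≤ ‖x‖ ^ 2 := by
  have h₁ := hT x
  have h₃ := norm_inner_pow_three_le hT x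
  simp only [add_apply, smul_apply, one_apply_eq_self, inner_add_right, inner_smul_right,
    inner_self_eq_norm_sq_to_K]
  calc _ ≤ ‖(3 : ℂ)⁻¹ * (‖x‖ : ℂ) ^ 2‖ + ‖(2 : ℂ)⁻¹ * ⟪x, T x⟫_ℂ‖ +
          ‖(6 : ℂ)⁻¹ * ⟪x, (T ^ 3) x⟫_ℂ‖ := norm_add₃_le
    _ ≤ 3⁻¹ * ‖x‖ ^ 2 + 2⁻¹ * ‖x‖ ^ 2 + 6⁻¹ * ‖x‖ ^ 2 := by
        simp only [norm_mul, norm_inv, norm_pow, Complex.norm_real, norm_norm,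
          Complex.norm_ofNat]
        gcongr
    _ = ‖x‖ ^ 2 := by ring

end Accretive

theorem norm_inner_le_numRad_mul_sq {N : ℕ} (A : Matrix (Fin N) (Fin N) ℂ)
    (x : EuclideanSpace ℂ (Fin N)) :
    ‖⟪x, Matrix.toEuclideanCLM (𝕜 := ℂ) A x⟫_ℂ‖ ≤ numRad A * ‖x‖ ^ 2 := by
  set T := Matrix.toEuclideanCLM (𝕜 := ℂ) A
  have hbdd :
      BddAbove {r : ℝ | ∃ y : EuclideanSpace ℂ (Fin N), ‖y‖ = 1 ∧ r = ‖⟪y, T y⟫_ℂ‖} := by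
    refine ⟨‖T‖, ?_⟩
    rintro _ ⟨y, hy, rfl⟩
    simpa [hy] using (norm_inner_le_norm y (T y)).trans
      (mul_le_mul_of_nonneg_left (T.le_opNorm y) (norm_nonneg y))
  rcases eq_or_ne x 0 with rfl | hx
  · simp
  set y := (‖x‖⁻¹ : ℂ) • x
  have hxy : x = (‖x‖ : ℂ) • y := by
    rw [smul_smul, mul_inv_cancel₀ (by simpa using hx), one_smul]
  calc ‖⟪x, T x⟫_ℂ‖ = ‖x‖ ^ 2 * ‖⟪y, T y⟫_ℂ‖ := by
        conv_lhs => rw [hxy]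
        simp [sq, mul_assoc]
    _ ≤ ‖x‖ ^ 2 * numRad A := by
        gcongr
        exact le_csSup hbdd ⟨y, norm_smul_inv_norm hx, rfl⟩
    _ = numRad A * ‖x‖ ^ 2 := mul_comm _ _

theorem numRad_le_iff {N : ℕ} {A : Matrix (Fin N) (Fin N) ℂ} {b : ℝ} (hb : 0 ≤ b) :
    numRad A ≤ b ↔ ∀ x, ‖⟪x, Matrix.toEuclideanCLM (𝕜 := ℂ) A x⟫_ℂ‖ ≤ b * ‖x‖ ^ 2 := by
  refine ⟨fun h x => (norm_inner_le_numRad_mul_sq A x).trans (by gcongr), fun h => ?_⟩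
  refine Real.sSup_le ?_ hb
  rintro _ ⟨x, hx, rfl⟩
  simpa [hx] using h x

theorem stmt_13 {N : ℕ} (A : Matrix (Fin N) (Fin N) ℂ) (h : numRad (1 + A) ≤ 1) :
    numRad (1 + A + (1 / 2 : ℂ) • A ^ 2 + (1 / 6 : ℂ) • A ^ 3) ≤ 1 := by
  set T := Matrix.toEuclideanCLM (𝕜 := ℂ) (1 + A)
  have hT : ∀ x, ‖⟪x, T x⟫_ℂ‖ ≤ ‖x‖ ^ 2 := fun x => by
    simpa only [one_mul] using (numRad_le_iff zero_le_one).mp h x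
  have hP : Matrix.toEuclideanCLM (𝕜 := ℂ) (1 + A + (1 / 2 : ℂ) • A ^ 2 + (1 / 6 : ℂ) • A ^ 3) =
      (3 : ℂ)⁻¹ • 1 + (2 : ℂ)⁻¹ • T + (6 : ℂ)⁻¹ • T ^ 3 := by
    rw [ssp_decomposition_rk3]
    simp only [T, map_add, map_smul, map_one, map_pow]
  refine (numRad_le_iff zero_le_one).mpr fun x => ?_
  rw [hP, one_mul]
  exact norm_inner_ssp_rk3_le hT x
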